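/- Let E be a real Hilbert space, let F : E → ℝ be differentiable, L-smooth with L > 0, and μ-strongly convex with μ > 0, and let W_g* ∈ E be a global minimizer of F with F* = F(W_g*). Let (Ω, P) be a probability space, W, W* ∈ E, η ≥ 0, and let g, q : Ω → E be square-integrable random vectors with E[g] = ḡ and E[q] = ∇F(W̄), where W̄ := W − η ḡ. Assume E[‖q − ∇F(W̄)‖²] ≤ σ_g² and E[⟨ḡ − g, ∇F(W̄) − q⟩] = 0. Then for every γ with 0 < γ ≤ 1/(2L): E[‖W − η g − γ q − W*‖²] ≤ E[‖W − η g − W*‖²] + γ² σ_g² + (2/μ)(F(W*) − F*) − 2γ(1 + μ/L − 2μγ)(F(W̄) − F*). -/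

import Mathlib

open MeasureTheory
open scoped RealInnerProductSpace

/-!
Write `X = W - η g - W*`. Expanding the square, `E‖X - γ q‖² = E‖X‖² - 2γ E⟪X, q⟫ + γ² E‖q‖²`.
Since `g` and `q` are uncorrelated, `E⟪X, q⟫ = ⟪∇F(W̄), W̄ - W*⟫`, and the bias-variance
decomposition gives `E‖q‖² ≤ σ_g² + ‖∇F(W̄)‖²`. What is left is deterministic: split
`W̄ - W* = (W̄ - W_g*) - (W* - W_g*)`, bound the first pairing from below by co-coercivity at the
minimiser, the second from above by Young's inequality and quadratic growth, and convert the
leftover `-γ (1/L - 2γ) ‖∇F(W̄)‖²` (nonpositive as `γ ≤ 1/(2L)`) into function values with the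
Polyak–Łojasiewicz inequality.
-/

section Smooth

variable {E : Type*} [NormedAddCommGroup E] [InnerProductSpace ℝ E] [CompleteSpace E]
  {F : E → ℝ} {L μ : ℝ}

theorem hasDerivAt_apply_add_smul_of_differentiable (hdiff : Differentiable ℝ F) (x v : E)
    (t : ℝ) :
    HasDerivAt (fun s : ℝ => F (x + s • v)) ⟪gradient F (x + t • v), v⟫ t := by
  have hline : HasDerivAt (fun s : ℝ => x + s • v) v t := by
    simpa using ((hasDerivAt_id t).smul_const v).const_add x
  exact (hdiff _).hasGradientAt.hasFDerivAt.comp_hasDerivAt t hline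

theorem le_add_inner_gradient_add_sq_of_lipschitz (hdiff : Differentiable ℝ F)
    (hsmooth : ∀ x y : E, ‖gradient F x - gradient F y‖ ≤ L * ‖x - y‖) (x y : E) :
    F y ≤ F x + ⟪gradient F x, y - x⟫ + L / 2 * ‖y - x‖ ^ 2 := by
  set v := y - x
  have hf (t : ℝ) : HasDerivAt (fun s => F (x + s • v) - s * ⟪gradient F x, v⟫)
      (⟪gradient F (x + t • v), v⟫ - ⟪gradient F x, v⟫) t :=
    (hasDerivAt_apply_add_smul_of_differentiable hdiff x v t).sub (hasDerivAt_mul_const _)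
  have hB (t : ℝ) : HasDerivAt (fun s => F x + L / 2 * ‖v‖ ^ 2 * s ^ 2)
      (L * ‖v‖ ^ 2 * t) t := by
    refine (((hasDerivAt_pow 2 t).const_mul (L / 2 * ‖v‖ ^ 2)).const_add (F x)).congr_deriv ?_
    norm_num
    ring
  have bound (t : ℝ) (ht : 0 ≤ t) :
      ⟪gradient F (x + t • v), v⟫ - ⟪gradient F x, v⟫ ≤ L * ‖v‖ ^ 2 * t :=
    calc ⟪gradient F (x + t • v), v⟫ - ⟪gradient F x, v⟫
        = ⟪gradient F (x + t • v) - gradient F x, v⟫ := (inner_sub_left _ _ _).symm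
      _ ≤ ‖gradient F (x + t • v) - gradient F x‖ * ‖v‖ := real_inner_le_norm _ _
      _ ≤ L * ‖x + t • v - x‖ * ‖v‖ := by gcongr; exact hsmooth _ _
      _ = L * ‖v‖ ^ 2 * t := by
        rw [add_sub_cancel_left, norm_smul, Real.norm_of_nonneg ht]; ring
  have key := image_le_of_deriv_right_le_deriv_boundary
    (fun t _ => (hf t).continuousAt.continuousWithinAt) (fun t _ => (hf t).hasDerivWithinAt)
    (by simp) (fun t _ => (hB t).continuousAt.continuousWithinAt)
    (fun t _ => (hB t).hasDerivWithinAt) (fun t ht => bound t ht.1)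
    (Set.right_mem_Icc.2 zero_le_one)
  simp only [one_smul, one_mul, one_pow, mul_one] at key
  rw [add_sub_cancel] at key
  linarith

theorem add_inner_gradient_add_sq_le_of_lipschitz (hL : 0 < L) (hdiff : Differentiable ℝ F)
    (hsmooth : ∀ x y : E, ‖gradient F x - gradient F y‖ ≤ L * ‖x - y‖)
    (hconv : ∀ x y : E, F x + ⟪gradient F x, y - x⟫ ≤ F y) (x y : E) :
    F x + ⟪gradient F x, y - x⟫ + 1 / (2 * L) * ‖gradient F y - gradient F x‖ ^ 2 ≤ F y := by
  set w := gradient F y - gradient F x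
  -- convexity at `x` and the descent lemma at `y`, both evaluated at the gradient step from `y`
  set z := y - L⁻¹ • w with hz
  have hlow := hconv x z
  have hup := le_add_inner_gradient_add_sq_of_lipschitz hdiff hsmooth y z
  rw [show z - x = (y - x) - L⁻¹ • w by rw [hz]; abel, inner_sub_right,
    real_inner_smul_right] at hlow
  rw [show z - y = -(L⁻¹ • w) by rw [hz]; abel, inner_neg_right, real_inner_smul_right, norm_neg,
    norm_smul, Real.norm_of_nonneg (inv_nonneg.2 hL.le)] at hup
  have hw : L⁻¹ * ⟪gradient F y, w⟫ - L⁻¹ * ⟪gradient F x, w⟫ = L⁻¹ * ‖w‖ ^ 2 := by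
    rw [← mul_sub, ← inner_sub_left, real_inner_self_eq_norm_sq]
  have hcoef : L / 2 * (L⁻¹ * ‖w‖) ^ 2 = L⁻¹ * ‖w‖ ^ 2 - 1 / (2 * L) * ‖w‖ ^ 2 := by
    field_simp
    ring
  linarith

theorem gradient_eq_zero_of_forall_le {x₀ : E} (hmin : ∀ x, F x₀ ≤ F x) : gradient F x₀ = 0 := by
  rw [gradient, IsLocalMin.fderiv_eq_zero (Filter.Eventually.of_forall hmin), map_zero]

theorem two_mul_sub_le_norm_gradient_sq (hμ : 0 < μ)
    (hsc : ∀ x y : E, F y ≥ F x + ⟪gradient F x, y - x⟫ + μ / 2 * ‖y - x‖ ^ 2) (x y : E) :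
    2 * μ * (F x - F y) ≤ ‖gradient F x‖ ^ 2 := by
  have hcs := real_inner_le_norm (gradient F x) (x - y)
  rw [← neg_sub y x, inner_neg_right, norm_neg] at hcs
  nlinarith [hsc x y, sq_nonneg (‖gradient F x‖ - μ * ‖y - x‖)]

theorem neg_two_mul_inner_gradient_add_sq_le (hL : 0 < L) (hμ : 0 < μ)
    (hdiff : Differentiable ℝ F)
    (hsmooth : ∀ x y : E, ‖gradient F x - gradient F y‖ ≤ L * ‖x - y‖)
    (hsc : ∀ x y : E, F y ≥ F x + ⟪gradient F x, y - x⟫ + μ / 2 * ‖y - x‖ ^ 2)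
    {x₀ : E} (hmin : ∀ x, F x₀ ≤ F x) (x y : E) {γ : ℝ} (hγ : 0 ≤ γ) (hγL : γ ≤ 1 / (2 * L)) :
    -(2 * γ) * ⟪gradient F x, x - y⟫ + γ ^ 2 * ‖gradient F x‖ ^ 2 ≤
      2 / μ * (F y - F x₀) - 2 * γ * (1 + μ / L - 2 * μ * γ) * (F x - F x₀) := by
  have hx₀ := gradient_eq_zero_of_forall_le hmin
  set G := ‖gradient F x‖
  have hcoercive : F x - F x₀ + 1 / (2 * L) * G ^ 2 ≤ ⟪gradient F x, x - x₀⟫ := by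
    have hconv (a b : E) : F a + ⟪gradient F a, b - a⟫ ≤ F b := by
      nlinarith [hsc a b, sq_nonneg ‖b - a‖]
    have h := add_inner_gradient_add_sq_le_of_lipschitz hL hdiff hsmooth hconv x x₀
    rw [hx₀, zero_sub, norm_neg, ← neg_sub x x₀, inner_neg_right] at h
    linarith
  have hgrowth : ‖y - x₀‖ ^ 2 ≤ 2 / μ * (F y - F x₀) := by
    have h := hsc x₀ y
    rw [hx₀, inner_zero_left] at h
    rw [div_mul_eq_mul_div, le_div_iff₀ hμ]
    linarith
  have hyoung : 2 * γ * ⟪gradient F x, y - x₀⟫ ≤ γ ^ 2 * G ^ 2 + ‖y - x₀‖ ^ 2 := by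
    have h := norm_sub_sq_real (γ • gradient F x) (y - x₀)
    rw [real_inner_smul_left, norm_smul, Real.norm_of_nonneg hγ] at h
    nlinarith [sq_nonneg ‖γ • gradient F x - (y - x₀)‖]
  have hpl := two_mul_sub_le_norm_gradient_sq hμ hsc x x₀
  have hstep : 0 ≤ γ * (1 / L - 2 * γ) := by
    have : 2 * (1 / (2 * L)) = 1 / L := by field_simp
    nlinarith
  calc -(2 * γ) * ⟪gradient F x, x - y⟫ + γ ^ 2 * G ^ 2
      = -(2 * γ) * ⟪gradient F x, x - x₀⟫ + 2 * γ * ⟪gradient F x, y - x₀⟫ + γ ^ 2 * G ^ 2 := by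
        rw [show x - y = (x - x₀) - (y - x₀) by abel, inner_sub_right]
        ring
    _ ≤ -(2 * γ) * (F x - F x₀ + 1 / (2 * L) * G ^ 2) + (γ ^ 2 * G ^ 2 + ‖y - x₀‖ ^ 2)
          + γ ^ 2 * G ^ 2 := by
        linarith [mul_le_mul_of_nonneg_left hcoercive (by positivity : (0 : ℝ) ≤ 2 * γ)]
    _ = -(2 * γ) * (F x - F x₀) - γ * (1 / L - 2 * γ) * G ^ 2 + ‖y - x₀‖ ^ 2 := by ring
    _ ≤ -(2 * γ) * (F x - F x₀) - γ * (1 / L - 2 * γ) * (2 * μ * (F x - F x₀))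
          + 2 / μ * (F y - F x₀) := by gcongr
    _ = 2 / μ * (F y - F x₀) - 2 * γ * (1 + μ / L - 2 * μ * γ) * (F x - F x₀) := by
        field_simp
        ring

end Smooth

section Moments

variable {E : Type*} [NormedAddCommGroup E] [InnerProductSpace ℝ E]
  {Ω : Type*} [MeasurableSpace Ω] {P : Measure Ω} {f g : Ω → E}

theorem MeasureTheory.MemLp.integrable_inner (hf : MemLp f 2 P) (hg : MemLp g 2 P) :
    Integrable (fun ω => ⟪f ω, g ω⟫) P := by
  refine (L2.integrable_inner (𝕜 := ℝ) (hf.toLp f) (hg.toLp g)).congr ?_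
  filter_upwards [hf.coeFn_toLp, hg.coeFn_toLp] with ω hfω hgω
  rw [hfω, hgω]

theorem integral_norm_sub_smul_sq (hf : MemLp f 2 P) (hg : MemLp g 2 P) (γ : ℝ) :
    ∫ ω, ‖f ω - γ • g ω‖ ^ 2 ∂P =
      ∫ ω, ‖f ω‖ ^ 2 ∂P - 2 * γ * ∫ ω, ⟪f ω, g ω⟫ ∂P + γ ^ 2 * ∫ ω, ‖g ω‖ ^ 2 ∂P := by
  have hf2 := (memLp_two_iff_integrable_sq_norm hf.1).mp hf
  have hg2 := (memLp_two_iff_integrable_sq_norm hg.1).mp hg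
  have hfg := hf.integrable_inner hg
  have hpt (ω : Ω) : ‖f ω - γ • g ω‖ ^ 2 =
      ‖f ω‖ ^ 2 - 2 * γ * ⟪f ω, g ω⟫ + γ ^ 2 * ‖g ω‖ ^ 2 := by
    rw [norm_sub_sq_real, real_inner_smul_right, norm_smul, mul_pow, Real.norm_eq_abs, sq_abs]
    ring
  simp_rw [hpt]
  rw [integral_add (by fun_prop) (by fun_prop), integral_sub hf2 (by fun_prop),
    integral_const_mul, integral_const_mul]

variable [CompleteSpace E] [IsProbabilityMeasure P]

theorem integral_inner_integral_sub (hf : MemLp f 2 P) (hg : MemLp g 2 P) :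
    ∫ ω, ⟪∫ ω, f ω ∂P - f ω, ∫ ω, g ω ∂P - g ω⟫ ∂P =
      ∫ ω, ⟪f ω, g ω⟫ ∂P - ⟪∫ ω, f ω ∂P, ∫ ω, g ω ∂P⟫ := by
  set a := ∫ ω, f ω ∂P
  set b := ∫ ω, g ω ∂P
  have hf1 := hf.integrable one_le_two
  have hg1 := hg.integrable one_le_two
  have hfg := hf.integrable_inner hg
  have hpt (ω : Ω) : ⟪a - f ω, b - g ω⟫ = ⟪f ω, g ω⟫ - ⟪a, g ω⟫ - ⟪b, f ω⟫ + ⟪a, b⟫ := by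
    simp only [inner_sub_left, inner_sub_right, real_inner_comm (f ω) b]
    ring
  simp_rw [hpt]
  rw [integral_add (by fun_prop) (by fun_prop), integral_sub (by fun_prop) (by fun_prop),
    integral_sub hfg (by fun_prop), integral_inner hg1, integral_inner hf1, integral_const,
    probReal_univ, one_smul, real_inner_comm a b]
  ring

theorem integral_norm_sub_integral_sq (hf : MemLp f 2 P) :
    ∫ ω, ‖f ω - ∫ ω, f ω ∂P‖ ^ 2 ∂P = ∫ ω, ‖f ω‖ ^ 2 ∂P - ‖∫ ω, f ω ∂P‖ ^ 2 := by
  simpa only [real_inner_self_eq_norm_sq, norm_sub_rev] using integral_inner_integral_sub hf hf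

theorem integral_inner_sub_smul_of_uncorrelated (hf : MemLp f 2 P) (hg : MemLp g 2 P)
    (hcross : ∫ ω, ⟪∫ ω, f ω ∂P - f ω, ∫ ω, g ω ∂P - g ω⟫ ∂P = 0) (c : E) (η : ℝ) :
    ∫ ω, ⟪c - η • f ω, g ω⟫ ∂P = ⟪c - η • ∫ ω, f ω ∂P, ∫ ω, g ω ∂P⟫ := by
  have hfg : ∫ ω, ⟪f ω, g ω⟫ ∂P = ⟪∫ ω, f ω ∂P, ∫ ω, g ω ∂P⟫ := by
    linarith [integral_inner_integral_sub hf hg]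
  simp_rw [inner_sub_left, real_inner_smul_left]
  rw [integral_sub ((hg.integrable one_le_two).const_inner c)
    ((hf.integrable_inner hg).const_mul η), integral_const_mul, integral_inner
    (hg.integrable one_le_two), hfg]

end Moments

theorem fedegg_one_step_pl_bound_general
    {E : Type*} [NormedAddCommGroup E] [InnerProductSpace ℝ E] [CompleteSpace E]
    (F : E → ℝ) (L μ : ℝ) (hL : 0 < L) (hμ : 0 < μ)
    (hdiff : Differentiable ℝ F)
    (hsmooth : ∀ x y : E, ‖gradient F x - gradient F y‖ ≤ L * ‖x - y‖)
    (hsc : ∀ x y : E, F y ≥ F x + ⟪gradient F x, y - x⟫ + μ / 2 * ‖y - x‖ ^ 2)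
    (Wg : E) (hWg : ∀ x : E, F Wg ≤ F x) (Fstar : ℝ) (hFstar : Fstar = F Wg)
    {Ω : Type*} [MeasurableSpace Ω] (P : Measure Ω) [IsProbabilityMeasure P]
    (W Wstar : E) (η : ℝ)
    (g q : Ω → E) (hg : MemLp g 2 P) (hq : MemLp q 2 P)
    (gbar : E) (hgbar : ∫ ω, g ω ∂P = gbar)
    (Wbar : E) (hWbar : Wbar = W - η • gbar)
    (hqbar : ∫ ω, q ω ∂P = gradient F Wbar)
    (σg : ℝ) (hvar : ∫ ω, ‖q ω - gradient F Wbar‖ ^ 2 ∂P ≤ σg ^ 2)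
    (hcross : ∫ ω, ⟪gbar - g ω, gradient F Wbar - q ω⟫ ∂P = 0) :
    ∀ γ : ℝ, 0 < γ → γ ≤ 1 / (2 * L) →
      ∫ ω, ‖W - η • g ω - γ • q ω - Wstar‖ ^ 2 ∂P ≤
        (∫ ω, ‖W - η • g ω - Wstar‖ ^ 2 ∂P)
          + γ ^ 2 * σg ^ 2
          + 2 / μ * (F Wstar - Fstar)
          - 2 * γ * (1 + μ / L - 2 * μ * γ) * (F Wbar - Fstar) := by
  intro γ hγ hγL
  set D := gradient F Wbar
  set X : Ω → E := fun ω => (W - Wstar) - η • g ω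
  have hX : MemLp X 2 P := (memLp_const _).sub (hg.const_smul η)
  have hXq : ∫ ω, ⟪X ω, q ω⟫ ∂P = ⟪D, Wbar - Wstar⟫ := by
    rw [← hgbar, ← hqbar] at hcross
    rw [integral_inner_sub_smul_of_uncorrelated hg hq hcross, hgbar, hqbar, real_inner_comm,
      hWbar, sub_right_comm]
  have hqq : ∫ ω, ‖q ω‖ ^ 2 ∂P ≤ σg ^ 2 + ‖D‖ ^ 2 := by
    have h := integral_norm_sub_integral_sq hq
    rw [hqbar] at h
    linarith
  have hXW : ∫ ω, ‖X ω‖ ^ 2 ∂P = ∫ ω, ‖W - η • g ω - Wstar‖ ^ 2 ∂P := by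
    congr! 4 with ω; simp only [X]; abel
  have hdet := neg_two_mul_inner_gradient_add_sq_le hL hμ hdiff hsmooth hsc hWg Wbar Wstar
    hγ.le hγL
  calc ∫ ω, ‖W - η • g ω - γ • q ω - Wstar‖ ^ 2 ∂P
      = ∫ ω, ‖X ω - γ • q ω‖ ^ 2 ∂P := by congr! 4 with ω; simp only [X]; abel
    _ = ∫ ω, ‖X ω‖ ^ 2 ∂P - 2 * γ * ⟪D, Wbar - Wstar⟫ + γ ^ 2 * ∫ ω, ‖q ω‖ ^ 2 ∂P := by
      rw [integral_norm_sub_smul_sq hX hq, hXq]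
    _ ≤ ∫ ω, ‖X ω‖ ^ 2 ∂P - 2 * γ * ⟪D, Wbar - Wstar⟫ + γ ^ 2 * (σg ^ 2 + ‖D‖ ^ 2) := by
      gcongr
    _ ≤ _ := by
      rw [hXW, hFstar]
      linarith

/-- One-step FedEGG-versus-FedAvg comparison of Theorem 1 in which the
gradient-norm term has been eliminated using the Polyak–Łojasiewicz inequality
implied by μ-strong convexity. -/
theorem fedegg_one_step_pl_bound
    {E : Type*} [NormedAddCommGroup E] [InnerProductSpace ℝ E] [CompleteSpace E]
    (F : E → ℝ) (L μ : ℝ) (hL : 0 < L) (hμ : 0 < μ)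
    (hdiff : Differentiable ℝ F)
    (hsmooth : ∀ x y : E, ‖gradient F x - gradient F y‖ ≤ L * ‖x - y‖)
    (hsc : ∀ x y : E, F y ≥ F x + ⟪gradient F x, y - x⟫ + μ / 2 * ‖y - x‖ ^ 2)
    (Wg : E) (hWg : ∀ x : E, F Wg ≤ F x) (Fstar : ℝ) (hFstar : Fstar = F Wg)
    {Ω : Type*} [MeasurableSpace Ω] (P : Measure Ω) [IsProbabilityMeasure P]
    (W Wstar : E) (η : ℝ) (hη : 0 ≤ η)
    (g q : Ω → E) (hg : MemLp g 2 P) (hq : MemLp q 2 P)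
    (gbar : E) (hgbar : ∫ ω, g ω ∂P = gbar)
    (Wbar : E) (hWbar : Wbar = W - η • gbar)
    (hqbar : ∫ ω, q ω ∂P = gradient F Wbar)
    (σg : ℝ) (hvar : ∫ ω, ‖q ω - gradient F Wbar‖ ^ 2 ∂P ≤ σg ^ 2)
    (hcross : ∫ ω, ⟪gbar - g ω, gradient F Wbar - q ω⟫ ∂P = 0) :
    ∀ γ : ℝ, 0 < γ → γ ≤ 1 / (2 * L) →
      ∫ ω, ‖W - η • g ω - γ • q ω - Wstar‖ ^ 2 ∂P ≤
        (∫ ω, ‖W - η • g ω - Wstar‖ ^ 2 ∂P)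
          + γ ^ 2 * σg ^ 2
          + 2 / μ * (F Wstar - Fstar)
          - 2 * γ * (1 + μ / L - 2 * μ * γ) * (F Wbar - Fstar) :=
  fedegg_one_step_pl_bound_general F L μ hL hμ hdiff hsmooth hsc Wg hWg Fstar hFstar P W Wstar η g q
    hg hq gbar hgbar Wbar hWbar hqbar σg hvar hcross
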